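/- arXiv:1810.12322 — 4 statements merged into one kernel-verified Lean document; each statement's English description precedes it below -/
import Mathlib

section
/- For any constants a, b and as z → ∞ over the positive reals, Γ(z+a)/Γ(z+b) = z^{a−b} + O(z^{a−b−1}); that is, there exist constants C, z₀ > 0 such that |Γ(z+a)/Γ(z+b) − z^{a−b}| ≤ C·z^{a−b−1} for all z ≥ z₀. -/
/-!
Put `R_{a,b}(z) = Γ(z+a)/Γ(z+b) · z^(b-a)`; the claim is `R_{a,b} = 1 + O(1/z)`. Functions of the
form `1 + O(1/z)` are closed under products and inverses, and `R_{a,c} R_{c,b} = R_{a,b}`, so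
"`R_{a,b} = 1 + O(1/z)`" is an equivalence relation between `a` and `b`. The functional equation
gives `R_{c+1,c}(z) = 1 + c/z`, which reduces everything to `R_{σ,0}` with `0 ≤ σ < 1`, and there
log-convexity of `Γ` (Wendel's inequality) gives `z/(z+σ) ≤ R_{σ,0}(z) ≤ 1`.
-/

open Real Filter Asymptotics Topology

namespace Asymptotics

variable {α 𝕜 : Type*} [NormedField 𝕜] {l : Filter α} {f g : α → 𝕜} {k : α → ℝ}

theorem IsBigO.mul_sub_one (hf : (fun x => f x - 1) =O[l] k) (hg : (fun x => g x - 1) =O[l] k)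
    (hk : k =O[l] fun _ => (1 : ℝ)) : (fun x => f x * g x - 1) =O[l] k := by
  have hfg : (fun x => (f x - 1) * (g x - 1)) =O[l] k := by
    simpa using hf.mul (hg.trans hk)
  exact ((hfg.add hf).add hg).congr_left fun x => by ring

theorem IsBigO.inv_sub_one (hf : (fun x => f x - 1) =O[l] k) (hk : Tendsto k l (𝓝 0)) :
    (fun x => (f x)⁻¹ - 1) =O[l] k := by
  have hf_one : Tendsto f l (𝓝 1) := by
    simpa using (hf.trans_tendsto hk).add_const 1
  have hf_inv : (fun x => (f x)⁻¹) =O[l] fun _ => (1 : ℝ) :=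
    (hf_one.inv₀ one_ne_zero).isBigO_one ℝ
  have h : (fun x => -(f x - 1) * (f x)⁻¹) =O[l] k := by
    simpa using hf.neg_left.mul hf_inv
  refine h.congr' ?_ EventuallyEq.rfl
  filter_upwards [hf_one.eventually_ne one_ne_zero] with x hx
  field_simp
  ring

end Asymptotics

namespace Real

theorem Gamma_add_le_Gamma_mul_rpow {x σ : ℝ} (hx : 0 < x) (hσ₀ : 0 < σ) (hσ₁ : σ < 1) :
    Gamma (x + σ) ≤ Gamma x * x ^ σ := by
  have hΓ : 0 < Gamma x := Gamma_pos_of_pos hx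
  calc Gamma (x + σ) = Gamma ((1 - σ) * x + σ * (x + 1)) := by ring_nf
    _ ≤ Gamma x ^ (1 - σ) * Gamma (x + 1) ^ σ :=
      Gamma_mul_add_mul_le_rpow_Gamma_mul_rpow_Gamma hx (by linarith) (by linarith) hσ₀ (by ring)
    _ = Gamma x * x ^ σ := by
      rw [Gamma_add_one hx.ne', mul_rpow hx.le hΓ.le, mul_left_comm, ← rpow_add hΓ,
        sub_add_cancel, rpow_one, mul_comm]

theorem mul_Gamma_le_Gamma_add_mul_rpow {x σ : ℝ} (hx : 0 < x) (hσ₀ : 0 < σ) (hσ₁ : σ < 1) :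
    x * Gamma x ≤ Gamma (x + σ) * (x + σ) ^ (1 - σ) := by
  have := Gamma_add_le_Gamma_mul_rpow (x := x + σ) (σ := 1 - σ) (by linarith) (by linarith)
    (by linarith)
  rwa [add_add_sub_cancel, Gamma_add_one hx.ne'] at this

end Real

noncomputable def gammaRatio (a b z : ℝ) : ℝ :=
  Gamma (z + a) / Gamma (z + b) * z ^ (b - a)

section gammaRatio

variable {a b c z σ : ℝ}

theorem Gamma_div_Gamma_eq_rpow_mul_gammaRatio (hz : 0 < z) :
    Gamma (z + a) / Gamma (z + b) = z ^ (a - b) * gammaRatio a b z := by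
  rw [gammaRatio, mul_left_comm, ← rpow_add hz, sub_add_sub_cancel, sub_self, rpow_zero, mul_one]

theorem gammaRatio_mul_gammaRatio (hz : 0 < z) (hc : Gamma (z + c) ≠ 0) :
    gammaRatio a c z * gammaRatio c b z = gammaRatio a b z := by
  simp only [gammaRatio]
  rw [show b - a = (c - a) + (b - c) by ring, rpow_add hz]
  field_simp

theorem gammaRatio_inv (hz : 0 ≤ z) : (gammaRatio a b z)⁻¹ = gammaRatio b a z := by
  rw [gammaRatio, gammaRatio, mul_inv, inv_div, ← rpow_neg hz, neg_sub]

theorem gammaRatio_add_one_self (hzc : 0 < z + c) : gammaRatio (c + 1) c z = (z + c) / z := by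
  rw [gammaRatio, ← add_assoc, Gamma_add_one hzc.ne',
    mul_div_cancel_right₀ _ (Gamma_pos_of_pos hzc).ne', sub_add_cancel_left, rpow_neg_one,
    div_eq_mul_inv]

theorem div_add_le_gammaRatio (hz : 0 < z) (hσ₀ : 0 < σ) (hσ₁ : σ < 1) :
    z / (z + σ) ≤ gammaRatio σ 0 z := by
  have hΓ := Gamma_pos_of_pos hz
  rw [gammaRatio, add_zero, zero_sub, rpow_neg hz.le, ← div_eq_mul_inv, div_div,
    div_le_div_iff₀ (by positivity) (by positivity)]
  calc z * (Gamma z * z ^ σ) ≤ z * Gamma z * (z + σ) ^ σ := by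
        rw [← mul_assoc]; gcongr; linarith
    _ ≤ Gamma (z + σ) * (z + σ) ^ (1 - σ) * (z + σ) ^ σ :=
        mul_le_mul_of_nonneg_right (mul_Gamma_le_Gamma_add_mul_rpow hz hσ₀ hσ₁) (by positivity)
    _ = Gamma (z + σ) * (z + σ) := by
        rw [mul_assoc, ← rpow_add (by linarith), sub_add_cancel, rpow_one]

theorem gammaRatio_le_one (hz : 0 < z) (hσ₀ : 0 < σ) (hσ₁ : σ < 1) :
    gammaRatio σ 0 z ≤ 1 := by
  have hΓ := Gamma_pos_of_pos hz
  rw [gammaRatio, add_zero, zero_sub, rpow_neg hz.le, ← div_eq_mul_inv, div_div,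
    div_le_one (by positivity)]
  exact Gamma_add_le_Gamma_mul_rpow hz hσ₀ hσ₁

theorem isBigO_gammaRatio_sub_one_trans
    (hac : (fun z => gammaRatio a c z - 1) =O[atTop] (·⁻¹))
    (hcb : (fun z => gammaRatio c b z - 1) =O[atTop] (·⁻¹)) :
    (fun z => gammaRatio a b z - 1) =O[atTop] (·⁻¹) := by
  refine (hac.mul_sub_one hcb (tendsto_inv_atTop_zero.isBigO_one ℝ)).congr' ?_ EventuallyEq.rfl
  filter_upwards [eventually_gt_atTop 0, eventually_gt_atTop (-c)] with z hz hzc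
  rw [gammaRatio_mul_gammaRatio hz (Gamma_pos_of_pos (by linarith)).ne']

theorem isBigO_gammaRatio_sub_one_symm (hab : (fun z => gammaRatio a b z - 1) =O[atTop] (·⁻¹)) :
    (fun z => gammaRatio b a z - 1) =O[atTop] (·⁻¹) := by
  refine (hab.inv_sub_one tendsto_inv_atTop_zero).congr' ?_ EventuallyEq.rfl
  filter_upwards [eventually_ge_atTop 0] with z hz
  rw [gammaRatio_inv hz]

theorem isBigO_gammaRatio_add_one_self_sub_one (c : ℝ) :
    (fun z => gammaRatio (c + 1) c z - 1) =O[atTop] (·⁻¹) := by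
  refine ((isBigO_refl (·⁻¹) atTop).const_mul_left c).congr' ?_ EventuallyEq.rfl
  filter_upwards [eventually_gt_atTop 0, eventually_gt_atTop (-c)] with z hz hzc
  rw [gammaRatio_add_one_self (by linarith)]
  field_simp
  ring

theorem isBigO_gammaRatio_self_sub_one (c : ℝ) :
    (fun z => gammaRatio c c z - 1) =O[atTop] (·⁻¹) :=
  isBigO_gammaRatio_sub_one_trans (isBigO_gammaRatio_sub_one_symm
    (isBigO_gammaRatio_add_one_self_sub_one c)) (isBigO_gammaRatio_add_one_self_sub_one c)

theorem isBigO_gammaRatio_add_int_self_sub_one (c : ℝ) (n : ℤ) :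
    (fun z => gammaRatio (c + n) c z - 1) =O[atTop] (·⁻¹) := by
  induction n using Int.induction_on with
  | zero => simpa using isBigO_gammaRatio_self_sub_one c
  | succ n ih =>
    rw [Int.cast_add, Int.cast_one, ← add_assoc]
    exact isBigO_gammaRatio_sub_one_trans (isBigO_gammaRatio_add_one_self_sub_one _) ih
  | pred n ih =>
    have h := isBigO_gammaRatio_sub_one_symm
      (isBigO_gammaRatio_add_one_self_sub_one (c + (-n : ℤ) - 1))
    rw [sub_add_cancel] at h
    rw [Int.cast_sub, Int.cast_one, ← add_sub_assoc]
    exact isBigO_gammaRatio_sub_one_trans h ih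

theorem isBigO_gammaRatio_sub_one_of_mem_Ico (hσ₀ : 0 ≤ σ) (hσ₁ : σ < 1) :
    (fun z => gammaRatio σ 0 z - 1) =O[atTop] (·⁻¹) := by
  rcases hσ₀.eq_or_lt with rfl | hσ₀
  · exact isBigO_gammaRatio_self_sub_one 0
  refine IsBigO.of_bound 1 ?_
  filter_upwards [eventually_gt_atTop 0] with z hz
  have h_lower := div_add_le_gammaRatio hz hσ₀ hσ₁
  have h_upper := gammaRatio_le_one hz hσ₀ hσ₁
  have h_gap : 1 - z / (z + σ) ≤ z⁻¹ := by
    rw [one_sub_div (by positivity), add_sub_cancel_left, div_le_iff₀ (by positivity)]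
    field_simp
    nlinarith
  rw [one_mul, norm_inv, norm_of_nonneg hz.le, norm_of_nonpos (by linarith)]
  linarith

theorem isBigO_gammaRatio_sub_one (a b : ℝ) :
    (fun z => gammaRatio a b z - 1) =O[atTop] (·⁻¹) := by
  have h_zero (a : ℝ) : (fun z => gammaRatio a 0 z - 1) =O[atTop] (·⁻¹) := by
    simpa only [Int.fract_add_floor] using isBigO_gammaRatio_sub_one_trans
      (isBigO_gammaRatio_add_int_self_sub_one (Int.fract a) ⌊a⌋)
      (isBigO_gammaRatio_sub_one_of_mem_Ico (Int.fract_nonneg a) (Int.fract_lt_one a))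
  exact isBigO_gammaRatio_sub_one_trans (h_zero a) (isBigO_gammaRatio_sub_one_symm (h_zero b))

end gammaRatio

/-- Asymptotics of ratios of Gamma functions:
`Γ(z+a)/Γ(z+b) = z^(a−b) ± O(z^(a−b−1))` as `z → ∞`. -/
theorem gamma_ratio_asymptotics (a b : ℝ) :
    ∃ C z₀ : ℝ, 0 < C ∧ 0 < z₀ ∧ ∀ z : ℝ, z₀ ≤ z →
      |Real.Gamma (z + a) / Real.Gamma (z + b) - z ^ (a - b)|
        ≤ C * z ^ (a - b - 1) := by
  obtain ⟨C, hC, hC_bound⟩ := (isBigO_gammaRatio_sub_one a b).exists_pos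
  obtain ⟨z₀, hz₀⟩ := eventually_atTop.mp hC_bound.bound
  refine ⟨C, max z₀ 1, hC, by positivity, fun z hz => ?_⟩
  have hz_pos : 0 < z := by linarith [le_max_right z₀ 1]
  have h_ratio := hz₀ z (le_of_max_le_left hz)
  rw [norm_inv, norm_of_nonneg hz_pos.le, norm_eq_abs] at h_ratio
  calc |Gamma (z + a) / Gamma (z + b) - z ^ (a - b)| = z ^ (a - b) * |gammaRatio a b z - 1| := by
        rw [Gamma_div_Gamma_eq_rpow_mul_gammaRatio hz_pos, ← mul_sub_one, abs_mul,
          abs_of_pos (rpow_pos_of_pos hz_pos _)]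
    _ ≤ z ^ (a - b) * (C * z⁻¹) := by gcongr
    _ = C * z ^ (a - b - 1) := by rw [rpow_sub hz_pos (a - b), rpow_one]; ring
end

section
/- For any integrable f : [0,1] → ℝ and any α ∈ (0,1), the following change-of-variables identity holds: ∫₀^α ∫_α^1 (v−u) f((α−u)/(v−u)) dv du = ((1−α)³/3)·∫₀^α f(x)/(1−x)³ dx + (α³/3)·∫_α^1 f(x)/x³ dx. -/
/-!
Substituting `x = (α - u) / (v - u)` turns the inner integral into
`(α - u)² ∫_{g u}^1 f x / x³ dx` with `g u = (α - u) / (1 - u)`. Integrating by parts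
against `d/du (-(α - u)³ / 3)` produces `α³/3 ∫_α^1 f x / x³ dx` plus
`(1 - α)/3 ∫_0^α (1 - u) f (g u) du`, and the substitution `x = g u` (an involution of
`[0, α]`) turns the latter into `(1 - α)² ∫_0^α f x / (1 - x)³ dx`. The tail
`∫_y^1 f x / x³ dx` blows up like `1 / y²`, but the boundary term at `u = α` still vanishes:
it is `(α - u) / 3` times the inner integral, which is bounded.
-/

open Set MeasureTheory Filter Topology

section

variable {f : ℝ → ℝ} {M α u : ℝ}

theorem hasDerivAt_sub_div_one_sub (α : ℝ) (hu : u ≠ 1) :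
    HasDerivAt (fun u => (α - u) / (1 - u)) ((α - 1) / (1 - u) ^ 2) u := by
  have h1u : 1 - u ≠ 0 := sub_ne_zero.mpr hu.symm
  refine (((hasDerivAt_id' u).const_sub α).div ((hasDerivAt_id' u).const_sub 1)
    h1u).congr_deriv ?_
  field_simp
  ring

theorem continuousOn_sub_div_one_sub (hα : α < 1) :
    ContinuousOn (fun u => (α - u) / (1 - u)) (Icc 0 α) := fun u hu =>
  (hasDerivAt_sub_div_one_sub α (by linarith [hu.2] : u ≠ 1)).continuousAt.continuousWithinAt

theorem sub_div_one_sub_mem_Ioo (hu : u < α) (hα : α < 1) :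
    (α - u) / (1 - u) ∈ Ioo 0 1 := by
  have h1u : 0 < 1 - u := by linarith
  exact ⟨div_pos (sub_pos.2 hu) h1u, (div_lt_one h1u).2 (by linarith)⟩

theorem mapsTo_sub_div_one_sub (hα : α < 1) :
    MapsTo (fun u => (α - u) / (1 - u)) (Icc 0 α) (Icc 0 α) := fun u hu => by
  have h1u : 0 < 1 - u := by linarith [hu.2]
  refine ⟨div_nonneg (by linarith [hu.2]) h1u.le, (div_le_iff₀ h1u).2 ?_⟩
  nlinarith [hu.1]

theorem integral_one_sub_mul_comp_sub_div_one_sub (hα₀ : 0 ≤ α) (hα₁ : α < 1)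
    (hf : ContinuousOn f (Icc 0 α)) :
    ∫ s in 0..α, (1 - s) * f ((α - s) / (1 - s)) =
      (1 - α) ^ 2 * ∫ x in 0..α, f x / (1 - x) ^ 3 := by
  have hI : uIcc 0 α = Icc 0 α := uIcc_of_le hα₀
  have hpos : ∀ s ∈ Icc (0 : ℝ) α, 0 < 1 - s := fun s hs => by linarith [hs.2]
  have hderiv : ∀ s ∈ uIcc 0 α,
      HasDerivAt (fun s => (α - s) / (1 - s)) ((α - 1) / (1 - s) ^ 2) s := fun s hs =>
    hasDerivAt_sub_div_one_sub α (by linarith [hpos s (hI ▸ hs)])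
  have hderiv_cont : ContinuousOn (fun s => (α - 1) / (1 - s) ^ 2) (uIcc 0 α) := by
    rw [hI]
    exact continuousOn_const.div ((continuousOn_const.sub continuousOn_id).pow 2)
      fun s hs => pow_ne_zero 2 (hpos s hs).ne'
  have hg : ContinuousOn (fun x => -((1 - α) ^ 2 * (f x / (1 - x) ^ 3))) (Icc 0 α) :=
    (continuousOn_const.mul (hf.div ((continuousOn_const.sub continuousOn_id).pow 3)
      fun x hx => pow_ne_zero 3 (hpos x hx).ne')).neg
  have := intervalIntegral.integral_comp_mul_deriv' hderiv hderiv_cont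
    (hg.mono (hI ▸ (mapsTo_sub_div_one_sub hα₁).image_subset))
  simp only [sub_zero, div_one, sub_self, zero_div] at this
  rw [intervalIntegral.integral_symm 0 α, intervalIntegral.integral_neg, neg_neg,
    intervalIntegral.integral_const_mul] at this
  rw [← this]
  refine intervalIntegral.integral_congr fun s hs => ?_
  have h1s := (hpos s (hI ▸ hs)).ne'
  have h1α : 1 - α ≠ 0 := by linarith
  have h1g : 1 - (α - s) / (1 - s) = (1 - α) / (1 - s) := by field_simp; ring
  simp only [Function.comp_apply, h1g]
  field_simp
  ring

noncomputable def cubicTail (f : ℝ → ℝ) (y : ℝ) : ℝ := ∫ t in y..1, f t / t ^ 3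

theorem hasDerivAt_cubicTail (hf : ContinuousOn f (Ioc 0 1)) {y : ℝ}
    (hy : y ∈ Ioo 0 1) : HasDerivAt (cubicTail f) (-(f y / y ^ 3)) y := by
  have hcont : ContinuousOn (fun t => f t / t ^ 3) (Ioc 0 1) :=
    hf.div (continuousOn_pow 3) fun t ht => pow_ne_zero 3 ht.1.ne'
  have hnhds : Ioc 0 1 ∈ 𝓝 y := Ioc_mem_nhds hy.1 hy.2
  refine intervalIntegral.integral_hasDerivAt_left ?_
    ((hcont.mono Ioo_subset_Ioc_self).stronglyMeasurableAtFilter isOpen_Ioo y hy)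
    (hcont.continuousAt hnhds)
  refine (hcont.mono ?_).intervalIntegrable
  rw [uIcc_of_le hy.2.le]
  exact Icc_subset_Ioc_iff hy.2.le |>.mpr ⟨hy.1, le_rfl⟩

theorem integral_mul_comp_div {c d : ℝ} (hc : 0 < c) (hd : 0 < d)
    (hf : ContinuousOn f (uIcc (c / d) 1)) :
    ∫ w in c..d, w * f (c / w) = c ^ 2 * cubicTail f (c / d) := by
  have hpos : ∀ w ∈ uIcc c d, 0 < w := fun w hw => lt_of_lt_of_le (lt_min hc hd) hw.1
  have hderiv : ∀ w ∈ uIcc c d, HasDerivAt (fun w => c / w) (-(c / w ^ 2)) w := fun w hw => by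
    simpa [div_eq_mul_inv] using (hasDerivAt_inv (hpos w hw).ne').const_mul c
  have hderiv_cont : ContinuousOn (fun w => -(c / w ^ 2)) (uIcc c d) :=
    (continuousOn_const.div (continuousOn_pow 2) fun w hw => pow_ne_zero 2 (hpos w hw).ne').neg
  have himage : (fun w => c / w) '' uIcc c d ⊆ uIcc (c / d) 1 := by
    have hanti : AntitoneOn (fun w => c / w) (uIcc c d) := fun a ha b _ hab =>
      div_le_div_of_nonneg_left hc.le (hpos a ha) hab
    simpa [div_self hc.ne', uIcc_comm] using hanti.image_uIcc_subset
  have hquot_pos : ∀ x ∈ uIcc (c / d) 1, 0 < x := fun x hx =>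
    lt_of_lt_of_le (lt_min (div_pos hc hd) one_pos) hx.1
  have hg : ContinuousOn (fun x => -(c ^ 2 * (f x / x ^ 3))) (uIcc (c / d) 1) :=
    (continuousOn_const.mul (hf.div (continuousOn_pow 3)
      fun x hx => pow_ne_zero 3 (hquot_pos x hx).ne')).neg
  have := intervalIntegral.integral_comp_mul_deriv' hderiv hderiv_cont (hg.mono himage)
  rw [div_self hc.ne', intervalIntegral.integral_symm (c / d) 1, intervalIntegral.integral_neg,
    neg_neg, intervalIntegral.integral_const_mul] at this
  rw [cubicTail, ← this]
  refine intervalIntegral.integral_congr fun w hw => ?_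
  have := (hpos w hw).ne'
  simp only [Function.comp_apply]
  field_simp

theorem integral_sub_mul_comp_div_sub (hf : ContinuousOn f (Ioc 0 1)) (hu : u < α)
    (hα : α ≤ 1) :
    ∫ v in α..1, (v - u) * f ((α - u) / (v - u)) =
      (α - u) ^ 2 * cubicTail f ((α - u) / (1 - u)) := by
  have hαu : 0 < α - u := sub_pos.2 hu
  have h1u : 0 < 1 - u := by linarith
  rw [intervalIntegral.integral_comp_sub_right (fun w => w * f ((α - u) / w))]
  refine integral_mul_comp_div hαu h1u (hf.mono ?_)
  have hle : (α - u) / (1 - u) ≤ 1 := (div_le_one h1u).2 (by linarith)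
  rw [uIcc_of_le hle]
  exact Icc_subset_Ioc_iff hle |>.2 ⟨div_pos hαu h1u, le_rfl⟩

theorem abs_sq_mul_cubicTail_le (hf : ContinuousOn f (Ioc 0 1))
    (hM : ∀ x ∈ Ioc 0 1, |f x| ≤ M) (hu : u ∈ Ico 0 α) (hα : α ≤ 1) :
    |(α - u) ^ 2 * cubicTail f ((α - u) / (1 - u))| ≤ M * (1 - α) := by
  rw [← integral_sub_mul_comp_div_sub hf hu.2 hα, ← abs_of_nonneg (sub_nonneg.2 hα),
    ← Real.norm_eq_abs]
  refine intervalIntegral.norm_integral_le_of_norm_le_const fun v hv => ?_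
  rw [uIoc_of_le hα] at hv
  have hvu : 0 < v - u := by linarith [hu.2, hv.1]
  have hratio : (α - u) / (v - u) ∈ Ioc 0 1 :=
    ⟨div_pos (by linarith [hu.2]) hvu, (div_le_one hvu).2 (by linarith [hv.1])⟩
  rw [Real.norm_eq_abs, abs_mul, abs_of_pos hvu]
  exact (mul_le_of_le_one_left (abs_nonneg _) (by linarith [hu.1, hv.2])).trans (hM _ hratio)

theorem continuousOn_sq_mul_cubicTail (hf : ContinuousOn f (Ioc 0 1)) (hα : α < 1) :
    ContinuousOn (fun u => (α - u) ^ 2 * cubicTail f ((α - u) / (1 - u))) (Iio α) :=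
  fun u hu => ((continuousAt_const.sub continuousAt_id).pow 2 |>.mul
    ((hasDerivAt_cubicTail hf (sub_div_one_sub_mem_Ioo hu hα)).continuousAt.comp (x := u)
      (hasDerivAt_sub_div_one_sub α (by linarith [mem_Iio.1 hu] : u ≠ 1)).continuousAt))
    |>.continuousWithinAt

theorem intervalIntegrable_sq_mul_cubicTail (hf : ContinuousOn f (Ioc 0 1))
    (hM : ∀ x ∈ Ioc 0 1, |f x| ≤ M) (hα₀ : 0 ≤ α) (hα₁ : α < 1) :
    IntervalIntegrable (fun u => (α - u) ^ 2 * cubicTail f ((α - u) / (1 - u))) volume 0 α := by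
  rw [intervalIntegrable_iff_integrableOn_Ioo_of_le hα₀]
  exact .of_bound measure_Ioo_lt_top
    (((continuousOn_sq_mul_cubicTail hf hα₁).mono Ioo_subset_Iio_self).aestronglyMeasurable
      measurableSet_Ioo) (M * (1 - α))
    (ae_restrict_of_forall_mem measurableSet_Ioo fun u hu =>
      abs_sq_mul_cubicTail_le hf hM (Ioo_subset_Ico_self hu) hα₁.le)

theorem hasDerivAt_cube_mul_cubicTail (hf : ContinuousOn f (Ioc 0 1)) (hu : u < α)
    (hα : α < 1) :
    HasDerivAt (fun u => -((α - u) ^ 3 / 3) * cubicTail f ((α - u) / (1 - u)))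
      ((α - u) ^ 2 * cubicTail f ((α - u) / (1 - u)) -
        (1 - α) / 3 * ((1 - u) * f ((α - u) / (1 - u)))) u := by
  have hαu : α - u ≠ 0 := by linarith
  have h1u : 1 - u ≠ 0 := by linarith
  have htail := (hasDerivAt_cubicTail hf (sub_div_one_sub_mem_Ioo hu hα)).comp u
    (hasDerivAt_sub_div_one_sub α (by linarith : u ≠ 1))
  have hcube : HasDerivAt (fun u => -((α - u) ^ 3 / 3)) ((α - u) ^ 2) u := by
    refine ((((hasDerivAt_id' u).const_sub α).pow 3).div_const 3).neg.congr_deriv ?_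
    ring
  refine (hcube.mul htail).congr_deriv ?_
  rw [Function.comp_apply, div_pow]
  field_simp
  ring

theorem continuousOn_cube_mul_cubicTail (hf : ContinuousOn f (Ioc 0 1))
    (hM : ∀ x ∈ Ioc 0 1, |f x| ≤ M) (hα₀ : 0 < α) (hα₁ : α < 1) :
    ContinuousOn (fun u => -((α - u) ^ 3 / 3) * cubicTail f ((α - u) / (1 - u))) (Icc 0 α) := by
  intro u hu
  rcases hu.2.lt_or_eq with hlt | hα
  · exact (hasDerivAt_cube_mul_cubicTail hf hlt hα₁).continuousAt.continuousWithinAt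
  subst u
  refine (continuousWithinAt_Iio_iff_Iic.1 ?_).mono fun x hx => hx.2
  have hfactor : (fun u => -((α - u) ^ 3 / 3) * cubicTail f ((α - u) / (1 - u))) =
      fun u => -((α - u) / 3) * ((α - u) ^ 2 * cubicTail f ((α - u) / (1 - u))) := by
    ext u; ring
  rw [ContinuousWithinAt, hfactor,
    show -((α - α) ^ 3 / 3) * cubicTail f ((α - α) / (1 - α)) = 0 by simp]
  refine Tendsto.zero_mul_isBoundedUnder_le ?_
    (isBoundedUnder_of_eventually_le (a := M * (1 - α)) ?_)
  · exact ((by fun_prop : Continuous fun u : ℝ => -((α - u) / 3)).tendsto' α 0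
      (by simp)).mono_left nhdsWithin_le_nhds
  · filter_upwards [Ioo_mem_nhdsLT hα₀] with u hu using
      abs_sq_mul_cubicTail_le hf hM (Ioo_subset_Ico_self hu) hα₁.le

theorem integral_sq_mul_cubicTail (hf : ContinuousOn f (Icc 0 1)) (hα₀ : 0 < α)
    (hα₁ : α < 1) :
    ∫ u in 0..α, (α - u) ^ 2 * cubicTail f ((α - u) / (1 - u)) =
      α ^ 3 / 3 * cubicTail f α +
        (1 - α) / 3 * ∫ s in 0..α, (1 - s) * f ((α - s) / (1 - s)) := by
  obtain ⟨M, hM⟩ := isCompact_Icc.exists_bound_of_continuousOn hf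
  have hf' : ContinuousOn f (Ioc 0 1) := hf.mono Ioc_subset_Icc_self
  have hM' : ∀ x ∈ Ioc 0 1, |f x| ≤ M := fun x hx => hM x (Ioc_subset_Icc_self hx)
  have hQ_int := intervalIntegrable_sq_mul_cubicTail hf' hM' hα₀.le hα₁
  have hr_int : IntervalIntegrable (fun s => (1 - s) * f ((α - s) / (1 - s))) volume 0 α :=
    ((continuousOn_const.sub continuousOn_id).mul (hf.comp (continuousOn_sub_div_one_sub hα₁)
      ((mapsTo_sub_div_one_sub hα₁).mono_right (Icc_subset_Icc_right hα₁.le)))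
      ).intervalIntegrable_of_Icc hα₀.le
  have hFTC := intervalIntegral.integral_eq_sub_of_hasDeriv_right_of_le hα₀.le
    (continuousOn_cube_mul_cubicTail hf' hM' hα₀ hα₁)
    (fun u hu => (hasDerivAt_cube_mul_cubicTail hf' hu.2 hα₁).hasDerivWithinAt)
    (hQ_int.sub (hr_int.const_mul _))
  rw [intervalIntegral.integral_sub hQ_int (hr_int.const_mul _),
    intervalIntegral.integral_const_mul] at hFTC
  simp only [sub_self, sub_zero, div_one] at hFTC
  linarith

end

/-- Change-of-variables identity for the middle-segment recursive term of
dual-pivot Quickselect. -/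
theorem middle_segment_change_of_variables (f : ℝ → ℝ)
    (hf : ContinuousOn f (Set.Icc (0:ℝ) 1))
    (α : ℝ) (hα : α ∈ Set.Ioo (0:ℝ) 1) :
    (∫ u in (0:ℝ)..α, ∫ v in α..(1:ℝ), (v - u) * f ((α - u) / (v - u)))
      = ((1 - α) ^ 3 / 3) * (∫ x in (0:ℝ)..α, f x / (1 - x) ^ 3)
        + (α ^ 3 / 3) * (∫ x in α..(1:ℝ), f x / x ^ 3) := by
  obtain ⟨hα₀, hα₁⟩ := hα
  have hinner : ∫ u in 0..α, ∫ v in α..1, (v - u) * f ((α - u) / (v - u)) =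
      ∫ u in 0..α, (α - u) ^ 2 * cubicTail f ((α - u) / (1 - u)) :=
    intervalIntegral.integral_congr_Ioo_of_le hα₀.le fun u hu =>
      integral_sub_mul_comp_div_sub (hf.mono Ioc_subset_Icc_self) hu.2 hα₁.le
  rw [hinner, integral_sq_mul_cubicTail hf hα₀ hα₁,
    integral_one_sub_mul_comp_sub_div_one_sub hα₀.le hα₁
      (hf.mono (Icc_subset_Icc_right hα₁.le)),
    cubicTail]
  ring
end

section
/- Suppose f : (0,1) → ℝ is four times differentiable and satisfies, for all α ∈ (0,1), the integral equation f(α) = a + 2[α²∫_α^1 f(x)/x³ dx − α³∫_α^1 f(x)/x⁴ dx + (1−α)²∫₀^α f(x)/(1−x)³ dx − (1−α)³∫₀^α f(x)/(1−x)⁴ dx + ((1−α)³/3)∫₀^α f(x)/(1−x)³ dx + (α³/3)∫_α^1 f(x)/x³ dx] for a constant a. Then f satisfies the differential equation f''''(α) = 2·(1 − 3α(1−α))/(α²(1−α)²) · f''(α) for all α ∈ (0,1). -/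
/-!
Write the four integrals as the moments `rightMoment f k t = ∫ x in t..1, f x / x ^ k` and
`leftMoment f k t = ∫ x in 0..t, f x / (1 - x) ^ k` (`k = 3, 4`), so that the equation reads
`f = a + T₀`, where `Tₙ` combines the moments with the `n`-th derivatives of the cubic coefficients.
By the fundamental theorem of calculus `Tₙ' = Tₙ₊₁ + wₙ f`, and with
`r = 2/t² - 2/t + 2/(1-t)² - 2/(1-t) = 2 (1 - 3t(1-t)) / (t²(1-t)²)` the weights are
`w₀ = 0, w₁ = r, w₂ = -2r', w₃ = r''`, while `T₄ = 0`. Hence `f'' = r f + T₂`, `T₂' = T₃ - 2r' f`,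
`T₃' = r'' f`, and eliminating `T₂, T₃` gives `f'''' = r f''`.

This needs `f` integrable near `0` and `1`, since otherwise the moments are `0` by convention.
If `f` were not integrable near `1`, the right moments would vanish and the equation would write `f`
on `[1/2, 1)` as a bounded term plus the integral of `f` against a nonnegative kernel of mass at
most `1/2`; evaluated at a maximum of `|f|` on `[1/2, x]`, this bounds `|f|` on `[1/2, 1)` by twice
that term, so `f` is integrable near `1` after all. Integrability near `0` follows from the
symmetry `f ↦ f (1 - ·)` of the equation.
-/

open MeasureTheory Set Polynomial intervalIntegral
open scoped Interval

theorem intervalIntegrable_div_iff_of_continuousOn {f g : ℝ → ℝ} {a b : ℝ} {μ : Measure ℝ}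
    (hg : ContinuousOn g [[a, b]]) (hg0 : ∀ x ∈ [[a, b]], g x ≠ 0) :
    IntervalIntegrable (fun x => f x / g x) μ a b ↔ IntervalIntegrable f μ a b := by
  refine ⟨fun h => (h.mul_continuousOn hg).congr fun x hx => ?_,
    fun h => (h.mul_continuousOn (hg.inv₀ hg0)).congr fun x hx => div_eq_mul_inv _ _ |>.symm⟩
  exact div_mul_cancel₀ _ (hg0 x (uIoc_subset_uIcc hx))

theorem intervalIntegrable_iff_of_continuousOn_uIcc {E : Type*} [NormedAddCommGroup E]
    {f : ℝ → E} {a b c : ℝ} {μ : Measure ℝ} [IsLocallyFiniteMeasure μ]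
    (hf : ContinuousOn f [[a, b]]) :
    IntervalIntegrable f μ a c ↔ IntervalIntegrable f μ b c :=
  ⟨hf.intervalIntegrable.symm.trans, hf.intervalIntegrable.trans⟩

theorem intervalIntegrable_of_continuousOn_of_norm_le {E : Type*} [NormedAddCommGroup E]
    {f : ℝ → E} {a b C : ℝ} (hab : a ≤ b) (hf : ContinuousOn f (Ioo a b))
    (hC : ∀ x ∈ Ioo a b, ‖f x‖ ≤ C) : IntervalIntegrable f volume a b := by
  rw [intervalIntegrable_iff_integrableOn_Ioo_of_le hab]
  exact (integrable_const C).mono' (hf.aestronglyMeasurable measurableSet_Ioo)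
    ((ae_restrict_iff' measurableSet_Ioo).2 (ae_of_all _ hC))

theorem iteratedDerivWithin_succ_apply_of_hasDerivAt {𝕜 F : Type*} [NontriviallyNormedField 𝕜]
    [NormedAddCommGroup F] [NormedSpace 𝕜 F] {f f' : 𝕜 → F} {s : Set 𝕜} (hs : IsOpen s)
    (hf : ∀ x ∈ s, HasDerivAt f (f' x) x) (n : ℕ) {x : 𝕜} (hx : x ∈ s) :
    iteratedDerivWithin (n + 1) f s x = iteratedDerivWithin n f' s x := by
  rw [iteratedDerivWithin_succ']
  exact iteratedDerivWithin_congr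
    (fun y hy => (derivWithin_of_isOpen hs hy).trans (hf y hy).deriv) hx

theorem iteratedDerivWithin_four_eq_of_hasDerivAt {s : Set ℝ} (hs : IsOpen s)
    {f f₁ r r₁ r₂ W V : ℝ → ℝ}
    (hr : ∀ x ∈ s, HasDerivAt r (r₁ x) x) (hr₁ : ∀ x ∈ s, HasDerivAt r₁ (r₂ x) x)
    (hf : ∀ x ∈ s, HasDerivAt f (f₁ x) x) (hf₁ : ∀ x ∈ s, HasDerivAt f₁ (r x * f x + W x) x)
    (hW : ∀ x ∈ s, HasDerivAt W (V x - 2 * r₁ x * f x) x)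
    (hV : ∀ x ∈ s, HasDerivAt V (r₂ x * f x) x) {x : ℝ} (hx : x ∈ s) :
    iteratedDerivWithin 4 f s x = r x * iteratedDerivWithin 2 f s x := by
  have hf₂ : ∀ y ∈ s, HasDerivAt (fun y => r y * f y + W y) (r y * f₁ y - r₁ y * f y + V y) y :=
    fun y hy => (((hr y hy).mul (hf y hy)).add (hW y hy)).congr_deriv (by ring)
  have hf₃ : ∀ y ∈ s, HasDerivAt (fun y => r y * f₁ y - r₁ y * f y + V y)
      (r y * (r y * f y + W y)) y :=
    fun y hy => ((((hr y hy).mul (hf₁ y hy)).sub ((hr₁ y hy).mul (hf y hy))).add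
      (hV y hy)).congr_deriv (by ring)
  have step := @iteratedDerivWithin_succ_apply_of_hasDerivAt ℝ ℝ _ _ _
  rw [step hs hf 3 hx, step hs hf₁ 2 hx, step hs hf₂ 1 hx, step hs hf₃ 0 hx, step hs hf 1 hx,
    step hs hf₁ 0 hx]
  simp

theorem hasDerivAt_inv_pow {𝕜 : Type*} [NontriviallyNormedField 𝕜] (n : ℕ) {x : 𝕜} (hx : x ≠ 0) :
    HasDerivAt (fun y => y⁻¹ ^ n) (-(n * x⁻¹ ^ (n + 1))) x := by
  refine ((hasDerivAt_inv hx).pow n).congr_deriv ?_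
  rcases n with _ | n
  · simp
  · simp [pow_succ]
    ring

theorem hasDerivAt_one_sub_inv_pow {𝕜 : Type*} [NontriviallyNormedField 𝕜] (n : ℕ) {x : 𝕜}
    (hx : 1 - x ≠ 0) : HasDerivAt (fun y => (1 - y)⁻¹ ^ n) (n * (1 - x)⁻¹ ^ (n + 1)) x := by
  simpa using (hasDerivAt_inv_pow n hx).comp_const_sub 1 x

noncomputable def rightMoment (f : ℝ → ℝ) (k : ℕ) (t : ℝ) : ℝ := ∫ x in t..1, f x / x ^ k

noncomputable def leftMoment (f : ℝ → ℝ) (k : ℕ) (t : ℝ) : ℝ := ∫ x in 0..t, f x / (1 - x) ^ k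

theorem rightMoment_comp_one_sub (f : ℝ → ℝ) (k : ℕ) (t : ℝ) :
    rightMoment (fun x => f (1 - x)) k t = leftMoment f k (1 - t) := by
  simpa [rightMoment, leftMoment] using
    integral_comp_sub_left (a := t) (b := 1) (fun x => f x / (1 - x) ^ k) 1

theorem leftMoment_comp_one_sub (f : ℝ → ℝ) (k : ℕ) (t : ℝ) :
    leftMoment (fun x => f (1 - x)) k t = rightMoment f k (1 - t) := by
  simpa [rightMoment, leftMoment] using
    integral_comp_sub_left (a := 0) (b := t) (fun x => f x / x ^ k) 1

section Moments

variable {f : ℝ → ℝ} {t : ℝ}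

theorem intervalIntegrable_div_pow_iff (hf : ContinuousOn f (Ioo 0 1)) (ht : t ∈ Ioo (0 : ℝ) 1)
    (k : ℕ) :
    IntervalIntegrable (fun x => f x / x ^ k) volume t 1 ↔
      IntervalIntegrable f volume (1 / 2) 1 := by
  have hpos : ∀ x ∈ [[t, 1]], 0 < x := fun x hx =>
    ht.1.trans_le (uIcc_of_le ht.2.le ▸ hx).1
  rw [intervalIntegrable_div_iff_of_continuousOn (continuousOn_pow k)
    fun x hx => pow_ne_zero k (hpos x hx).ne']
  exact intervalIntegrable_iff_of_continuousOn_uIcc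
    (hf.mono (ordConnected_Ioo.uIcc_subset ht (show (1 / 2 : ℝ) ∈ Ioo 0 1 by norm_num)))

theorem intervalIntegrable_div_one_sub_pow_iff (hf : ContinuousOn f (Ioo 0 1))
    (ht : t ∈ Ioo (0 : ℝ) 1) (k : ℕ) :
    IntervalIntegrable (fun x => f x / (1 - x) ^ k) volume 0 t ↔
      IntervalIntegrable f volume 0 (1 / 2) := by
  have hpos : ∀ x ∈ [[0, t]], 0 < 1 - x := fun x hx =>
    sub_pos.2 ((uIcc_of_le ht.1.le ▸ hx).2.trans_lt ht.2)
  rw [intervalIntegrable_div_iff_of_continuousOn (by fun_prop)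
    fun x hx => pow_ne_zero k (hpos x hx).ne']
  have := intervalIntegrable_iff_of_continuousOn_uIcc (c := 0) (μ := volume)
    (hf.mono (ordConnected_Ioo.uIcc_subset ht (show (1 / 2 : ℝ) ∈ Ioo 0 1 by norm_num)))
  exact ⟨fun h => (this.1 h.symm).symm, fun h => (this.2 h.symm).symm⟩

theorem hasDerivAt_rightMoment (hf : ContinuousOn f (Ioo 0 1))
    (h₁ : IntervalIntegrable f volume (1 / 2) 1) (ht : t ∈ Ioo (0 : ℝ) 1) (k : ℕ) :
    HasDerivAt (rightMoment f k) (-(f t / t ^ k)) t := by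
  have hc : ContinuousOn (fun x => f x / x ^ k) (Ioo 0 1) :=
    hf.div (continuousOn_pow k) fun x hx => pow_ne_zero k hx.1.ne'
  exact integral_hasDerivAt_left ((intervalIntegrable_div_pow_iff hf ht k).2 h₁)
    (hc.stronglyMeasurableAtFilter isOpen_Ioo t ht) (hc.continuousAt (isOpen_Ioo.mem_nhds ht))

theorem hasDerivAt_leftMoment (hf : ContinuousOn f (Ioo 0 1))
    (h₀ : IntervalIntegrable f volume 0 (1 / 2)) (ht : t ∈ Ioo (0 : ℝ) 1) (k : ℕ) :
    HasDerivAt (leftMoment f k) (f t / (1 - t) ^ k) t := by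
  have hc : ContinuousOn (fun x => f x / (1 - x) ^ k) (Ioo 0 1) :=
    hf.div (by fun_prop) fun x hx => pow_ne_zero k (sub_pos.2 hx.2).ne'
  exact integral_hasDerivAt_right ((intervalIntegrable_div_one_sub_pow_iff hf ht k).2 h₀)
    (hc.stronglyMeasurableAtFilter isOpen_Ioo t ht) (hc.continuousAt (isOpen_Ioo.mem_nhds ht))

end Moments

noncomputable def momentTerm (f : ℝ → ℝ) (p q : ℝ[X]) (n : ℕ) (t : ℝ) : ℝ :=
  (derivative^[n] p).eval t * rightMoment f 3 t + (derivative^[n] q).eval t * rightMoment f 4 t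
    + (-1) ^ n * ((derivative^[n] p).eval (1 - t) * leftMoment f 3 t
      + (derivative^[n] q).eval (1 - t) * leftMoment f 4 t)

noncomputable def momentWeight (p q : ℝ[X]) (n : ℕ) (t : ℝ) : ℝ :=
  (-1) ^ n * ((derivative^[n] p).eval (1 - t) / (1 - t) ^ 3
      + (derivative^[n] q).eval (1 - t) / (1 - t) ^ 4)
    - ((derivative^[n] p).eval t / t ^ 3 + (derivative^[n] q).eval t / t ^ 4)

theorem hasDerivAt_momentTerm {f : ℝ → ℝ} {t : ℝ}
    (hR : ∀ k : ℕ, HasDerivAt (rightMoment f k) (-(f t / t ^ k)) t)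
    (hL : ∀ k : ℕ, HasDerivAt (leftMoment f k) (f t / (1 - t) ^ k) t) (p q : ℝ[X]) (n : ℕ) :
    HasDerivAt (momentTerm f p q n)
      (momentTerm f p q (n + 1) t + momentWeight p q n t * f t) t := by
  set P := derivative^[n] p
  set Q := derivative^[n] q
  have hrefl (r : ℝ[X]) : HasDerivAt (fun y => r.eval (1 - y)) (-(derivative r).eval (1 - t)) t :=
    (r.hasDerivAt (1 - t)).comp_const_sub 1 t
  refine (((P.hasDerivAt t).mul (hR 3)).add ((Q.hasDerivAt t).mul (hR 4)) |>.add
    ((((hrefl P).mul (hL 3)).add ((hrefl Q).mul (hL 4))).const_mul ((-1) ^ n))).congr_deriv ?_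
  simp only [momentTerm, momentWeight, Function.iterate_succ_apply', pow_succ, P, Q]
  ring

noncomputable def ybbCoeff₃ : ℝ[X] := 2 * X ^ 2 + C (2 / 3) * X ^ 3

noncomputable def ybbCoeff₄ : ℝ[X] := -2 * X ^ 3

def YBBEquation (f : ℝ → ℝ) (a : ℝ) : Prop :=
  ∀ α ∈ Ioo (0 : ℝ) 1, f α = a + 2 * (α ^ 2 * rightMoment f 3 α - α ^ 3 * rightMoment f 4 α
    + (1 - α) ^ 2 * leftMoment f 3 α - (1 - α) ^ 3 * leftMoment f 4 α
    + ((1 - α) ^ 3 / 3) * leftMoment f 3 α + (α ^ 3 / 3) * rightMoment f 3 α)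

noncomputable def ybbRate (t : ℝ) : ℝ := 2 * (t⁻¹ ^ 2 - t⁻¹ + (1 - t)⁻¹ ^ 2 - (1 - t)⁻¹)

noncomputable def ybbRate' (t : ℝ) : ℝ :=
  2 * (t⁻¹ ^ 2 - 2 * t⁻¹ ^ 3 + 2 * (1 - t)⁻¹ ^ 3 - (1 - t)⁻¹ ^ 2)

noncomputable def ybbRate'' (t : ℝ) : ℝ :=
  4 * (3 * t⁻¹ ^ 4 - t⁻¹ ^ 3 + 3 * (1 - t)⁻¹ ^ 4 - (1 - t)⁻¹ ^ 3)

section Derivatives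

variable {t : ℝ}

theorem hasDerivAt_ybbRate (ht : t ∈ Ioo (0 : ℝ) 1) : HasDerivAt ybbRate (ybbRate' t) t := by
  have ht₀ : t ≠ 0 := ht.1.ne'
  have ht₁ : 1 - t ≠ 0 := (sub_pos.2 ht.2).ne'
  refine (((hasDerivAt_inv_pow 2 ht₀).sub (hasDerivAt_inv ht₀)).add
    (hasDerivAt_one_sub_inv_pow 2 ht₁) |>.sub ((hasDerivAt_inv ht₁).comp_const_sub 1 t)).const_mul 2
    |>.congr_deriv ?_
  simp only [ybbRate', ← inv_pow]
  push_cast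
  ring

theorem hasDerivAt_ybbRate' (ht : t ∈ Ioo (0 : ℝ) 1) : HasDerivAt ybbRate' (ybbRate'' t) t := by
  have ht₀ : t ≠ 0 := ht.1.ne'
  have ht₁ : 1 - t ≠ 0 := (sub_pos.2 ht.2).ne'
  refine (((hasDerivAt_inv_pow 2 ht₀).sub ((hasDerivAt_inv_pow 3 ht₀).const_mul 2)).add
    ((hasDerivAt_one_sub_inv_pow 3 ht₁).const_mul 2) |>.sub
    (hasDerivAt_one_sub_inv_pow 2 ht₁)).const_mul 2 |>.congr_deriv ?_
  simp only [ybbRate'']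
  push_cast
  ring

theorem ybbRate_eq (ht : t ∈ Ioo (0 : ℝ) 1) :
    ybbRate t = 2 * (1 - 3 * t * (1 - t)) / (t ^ 2 * (1 - t) ^ 2) := by
  have ht₀ : t ≠ 0 := ht.1.ne'
  have ht₁ : 1 - t ≠ 0 := (sub_pos.2 ht.2).ne'
  simp only [ybbRate]
  field_simp
  ring

theorem momentWeight_ybb_zero (ht : t ∈ Ioo (0 : ℝ) 1) :
    momentWeight ybbCoeff₃ ybbCoeff₄ 0 t = 0 := by
  have ht₀ : t ≠ 0 := ht.1.ne'
  have ht₁ : 1 - t ≠ 0 := (sub_pos.2 ht.2).ne'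
  simp [momentWeight, ybbCoeff₃, ybbCoeff₄]
  field_simp
  ring

theorem momentWeight_ybb_one (ht : t ∈ Ioo (0 : ℝ) 1) :
    momentWeight ybbCoeff₃ ybbCoeff₄ 1 t = ybbRate t := by
  have ht₀ : t ≠ 0 := ht.1.ne'
  have ht₁ : 1 - t ≠ 0 := (sub_pos.2 ht.2).ne'
  simp [momentWeight, ybbCoeff₃, ybbCoeff₄, ybbRate]
  field_simp
  ring

theorem momentWeight_ybb_two (ht : t ∈ Ioo (0 : ℝ) 1) :
    momentWeight ybbCoeff₃ ybbCoeff₄ 2 t = -2 * ybbRate' t := by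
  have ht₀ : t ≠ 0 := ht.1.ne'
  have ht₁ : 1 - t ≠ 0 := (sub_pos.2 ht.2).ne'
  simp [momentWeight, ybbCoeff₃, ybbCoeff₄, ybbRate']
  field_simp
  ring

theorem momentWeight_ybb_three (ht : t ∈ Ioo (0 : ℝ) 1) :
    momentWeight ybbCoeff₃ ybbCoeff₄ 3 t = ybbRate'' t := by
  have ht₀ : t ≠ 0 := ht.1.ne'
  have ht₁ : 1 - t ≠ 0 := (sub_pos.2 ht.2).ne'
  simp [momentWeight, ybbCoeff₃, ybbCoeff₄, ybbRate'']
  field_simp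
  ring

theorem momentTerm_ybb_four (f : ℝ → ℝ) : momentTerm f ybbCoeff₃ ybbCoeff₄ 4 = 0 := by
  ext t
  simp only [momentTerm, ybbCoeff₃, ybbCoeff₄, Function.iterate_succ_apply',
    Function.iterate_zero_apply]
  simp

end Derivatives

section Equation

variable {f : ℝ → ℝ} {a : ℝ}

theorem YBBEquation.comp_one_sub (h : YBBEquation f a) : YBBEquation (fun x => f (1 - x)) a := by
  intro α hα
  simp only [rightMoment_comp_one_sub, leftMoment_comp_one_sub]
  rw [h (1 - α) ⟨sub_pos.2 hα.2, sub_lt_self 1 hα.1⟩, sub_sub_cancel]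
  ring

theorem YBBEquation.eq_add_momentTerm (h : YBBEquation f a) {t : ℝ} (ht : t ∈ Ioo (0 : ℝ) 1) :
    f t = a + momentTerm f ybbCoeff₃ ybbCoeff₄ 0 t := by
  rw [h t ht]
  simp [momentTerm, ybbCoeff₃, ybbCoeff₄]
  ring

noncomputable def leftKernel (x y : ℝ) : ℝ :=
  ybbCoeff₃.eval (1 - x) / (1 - y) ^ 3 + ybbCoeff₄.eval (1 - x) / (1 - y) ^ 4

theorem leftKernel_nonneg {x y : ℝ} (hyx : y ≤ x) (hx : x < 1) : 0 ≤ leftKernel x y := by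
  have hu : 0 < 1 - x := sub_pos.2 hx
  have hv : 1 - x ≤ 1 - y := by linarith
  have hv₀ : 0 < 1 - y := hu.trans_le hv
  have hK : leftKernel x y
      = ((2 * (1 - x) ^ 2 + 2 / 3 * (1 - x) ^ 3) * (1 - y) - 2 * (1 - x) ^ 3) / (1 - y) ^ 4 := by
    simp [leftKernel, ybbCoeff₃, ybbCoeff₄]
    field_simp
    ring
  rw [hK]
  refine div_nonneg ?_ (by positivity)
  nlinarith [mul_le_mul_of_nonneg_left hv (sq_nonneg (1 - x)), pow_pos hu 3]

theorem continuousOn_leftKernel (x : ℝ) : ContinuousOn (leftKernel x) (Iio 1) := by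
  have hc (k : ℕ) : ContinuousOn (fun y : ℝ => (1 - y) ^ k) (Iio 1) := by fun_prop
  exact (continuousOn_const.div (hc 3) fun y hy => pow_ne_zero 3 (sub_pos.2 hy).ne').add
    (continuousOn_const.div (hc 4) fun y hy => pow_ne_zero 4 (sub_pos.2 hy).ne')

theorem integral_leftKernel {x : ℝ} (hx : x ∈ Ico (1 / 2 : ℝ) 1) :
    ∫ y in (1 / 2)..x, leftKernel x y
      = 1 / 3 + (1 - x) / 3 - 4 * (1 - x) ^ 2 + 4 * (1 - x) ^ 3 := by
  have hy : ∀ y ∈ [[1 / 2, x]], 1 - y ≠ 0 := fun y hy =>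
    (sub_pos.2 ((uIcc_of_le hx.1 ▸ hy).2.trans_lt hx.2)).ne'
  have hderiv : ∀ y ∈ [[1 / 2, x]], HasDerivAt (fun y => ybbCoeff₃.eval (1 - x) / 2 * (1 - y)⁻¹ ^ 2
      + ybbCoeff₄.eval (1 - x) / 3 * (1 - y)⁻¹ ^ 3) (leftKernel x y) y := fun y hy' =>
    (((hasDerivAt_one_sub_inv_pow 2 (hy y hy')).const_mul _).add
      ((hasDerivAt_one_sub_inv_pow 3 (hy y hy')).const_mul _)).congr_deriv (by
        simp only [leftKernel]
        push_cast
        field_simp)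
  have hx₁ : 1 - x ≠ 0 := (sub_pos.2 hx.2).ne'
  have hcont : ContinuousOn (leftKernel x) [[1 / 2, x]] :=
    (continuousOn_leftKernel x).mono (ordConnected_Iio.uIcc_subset (by norm_num) hx.2)
  rw [integral_eq_sub_of_hasDerivAt hderiv hcont.intervalIntegrable]
  simp [ybbCoeff₃, ybbCoeff₄]
  field_simp
  ring

theorem eq_add_integral_leftKernel_of_left_equation (hf : ContinuousOn f (Ioo 0 1))
    (h₀ : IntervalIntegrable f volume 0 (1 / 2)) {x : ℝ} (hx : x ∈ Ico (1 / 2 : ℝ) 1)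
    (heq : f x = a + ybbCoeff₃.eval (1 - x) * leftMoment f 3 x
      + ybbCoeff₄.eval (1 - x) * leftMoment f 4 x) :
    f x = a + ybbCoeff₃.eval (1 - x) * leftMoment f 3 (1 / 2)
      + ybbCoeff₄.eval (1 - x) * leftMoment f 4 (1 / 2)
      + ∫ y in (1 / 2)..x, leftKernel x y * f y := by
  have hint (k : ℕ) : IntervalIntegrable (fun y => f y / (1 - y) ^ k) volume (1 / 2) x := by
    refine ContinuousOn.intervalIntegrable ?_
    rw [uIcc_of_le hx.1]
    exact (hf.mono fun y hy => ⟨by linarith [hy.1], hy.2.trans_lt hx.2⟩).div (by fun_prop)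
      fun y hy => pow_ne_zero k (sub_pos.2 (hy.2.trans_lt hx.2)).ne'
  have hsplit (k : ℕ) : leftMoment f k x
      = leftMoment f k (1 / 2) + ∫ y in (1 / 2)..x, f y / (1 - y) ^ k :=
    (integral_add_adjacent_intervals
      ((intervalIntegrable_div_one_sub_pow_iff hf (by norm_num) k).2 h₀) (hint k)).symm
  have hkernel : ∫ y in (1 / 2)..x, leftKernel x y * f y
      = ybbCoeff₃.eval (1 - x) * (∫ y in (1 / 2)..x, f y / (1 - y) ^ 3)
        + ybbCoeff₄.eval (1 - x) * ∫ y in (1 / 2)..x, f y / (1 - y) ^ 4 := by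
    rw [← intervalIntegral.integral_const_mul, ← intervalIntegral.integral_const_mul,
      ← intervalIntegral.integral_add ((hint 3).const_mul _) ((hint 4).const_mul _)]
    refine integral_congr fun y _ => ?_
    simp only [leftKernel]
    ring
  rw [heq, hsplit 3, hsplit 4, hkernel]
  ring

theorem abs_le_of_left_equation (hf : ContinuousOn f (Ioo 0 1))
    (h₀ : IntervalIntegrable f volume 0 (1 / 2)) {x M : ℝ} (hx : x ∈ Ico (1 / 2 : ℝ) 1)
    (heq : f x = a + ybbCoeff₃.eval (1 - x) * leftMoment f 3 x
      + ybbCoeff₄.eval (1 - x) * leftMoment f 4 x)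
    (hM : ∀ y ∈ Icc (1 / 2 : ℝ) x, |f y| ≤ M) :
    |f x| ≤ |a| + |leftMoment f 3 (1 / 2)| + |leftMoment f 4 (1 / 2)| + M / 2 := by
  have hM₀ : 0 ≤ M := (abs_nonneg _).trans (hM x ⟨hx.1, le_rfl⟩)
  have hu : 0 < 1 - x := sub_pos.2 hx.2
  have hu' : 1 - x ≤ 1 / 2 := by linarith [hx.1]
  have hc₃ : |ybbCoeff₃.eval (1 - x)| ≤ 1 := by
    simp only [ybbCoeff₃, eval_add, eval_mul, eval_pow, eval_X, eval_C, eval_ofNat]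
    rw [abs_le]
    constructor <;> nlinarith [pow_pos hu 2, pow_pos hu 3]
  have hc₄ : |ybbCoeff₄.eval (1 - x)| ≤ 1 := by
    simp only [ybbCoeff₄, eval_mul, eval_neg, eval_pow, eval_X, eval_ofNat]
    rw [abs_le]
    constructor <;> nlinarith [pow_pos hu 2, pow_pos hu 3]
  have hint : |∫ y in (1 / 2)..x, leftKernel x y * f y| ≤ M / 2 := by
    have hKint : IntervalIntegrable (fun y => leftKernel x y * M) volume (1 / 2) x :=
      ((continuousOn_leftKernel x).mono (ordConnected_Iio.uIcc_subset (by norm_num) hx.2)).mul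
        continuousOn_const |>.intervalIntegrable
    calc |∫ y in (1 / 2)..x, leftKernel x y * f y|
        ≤ ∫ y in (1 / 2)..x, leftKernel x y * M :=
          norm_integral_le_of_norm_le (f := fun y => leftKernel x y * f y) hx.1
            (ae_of_all _ fun y hy => by
              rw [Real.norm_eq_abs, abs_mul, abs_of_nonneg (leftKernel_nonneg hy.2 hx.2)]
              exact mul_le_mul_of_nonneg_left (hM y ⟨hy.1.le, hy.2⟩)
                (leftKernel_nonneg hy.2 hx.2)) hKint
      _ = M * (1 / 3 + (1 - x) / 3 - 4 * (1 - x) ^ 2 + 4 * (1 - x) ^ 3) := by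
          rw [intervalIntegral.integral_mul_const, integral_leftKernel hx, mul_comm]
      _ ≤ M * (1 / 2) := by
          gcongr
          nlinarith [pow_pos hu 2, pow_pos hu 3]
      _ = M / 2 := by ring
  rw [eq_add_integral_leftKernel_of_left_equation hf h₀ hx heq]
  have hP := mul_le_of_le_one_left (abs_nonneg (leftMoment f 3 (1 / 2))) hc₃
  have hQ := mul_le_of_le_one_left (abs_nonneg (leftMoment f 4 (1 / 2))) hc₄
  rw [← abs_mul] at hP hQ
  linarith [abs_add_le (a + ybbCoeff₃.eval (1 - x) * leftMoment f 3 (1 / 2)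
      + ybbCoeff₄.eval (1 - x) * leftMoment f 4 (1 / 2)) (∫ y in (1 / 2)..x, leftKernel x y * f y),
    abs_add_le (a + ybbCoeff₃.eval (1 - x) * leftMoment f 3 (1 / 2))
      (ybbCoeff₄.eval (1 - x) * leftMoment f 4 (1 / 2)),
    abs_add_le a (ybbCoeff₃.eval (1 - x) * leftMoment f 3 (1 / 2))]

end Equation

section Integrability

variable {f : ℝ → ℝ} {a : ℝ}

theorem exists_bound_of_left_equation (hf : ContinuousOn f (Ioo 0 1))
    (heq : ∀ x ∈ Ico (1 / 2 : ℝ) 1, f x = a + ybbCoeff₃.eval (1 - x) * leftMoment f 3 x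
      + ybbCoeff₄.eval (1 - x) * leftMoment f 4 x) :
    ∃ C, ∀ x ∈ Ico (1 / 2 : ℝ) 1, |f x| ≤ C := by
  by_cases h₀ : IntervalIntegrable f volume 0 (1 / 2)
  · refine ⟨2 * (|a| + |leftMoment f 3 (1 / 2)| + |leftMoment f 4 (1 / 2)|), fun x hx => ?_⟩
    have hfx : ContinuousOn (fun y => |f y|) (Icc (1 / 2) x) :=
      (hf.mono fun y hy => ⟨by linarith [hy.1], hy.2.trans_lt hx.2⟩).abs
    obtain ⟨y, hy, hmax⟩ := isCompact_Icc.exists_isMaxOn (nonempty_Icc.2 hx.1) hfx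
    have hy' : y ∈ Ico (1 / 2 : ℝ) 1 := ⟨hy.1, hy.2.trans_lt hx.2⟩
    have hxy : |f x| ≤ |f y| := hmax (right_mem_Icc.2 hx.1)
    have := abs_le_of_left_equation (M := |f y|) hf h₀ hy' (heq y hy')
      fun z hz => hmax ⟨hz.1, hz.2.trans hy.2⟩
    linarith
  · refine ⟨|a|, fun x hx => ?_⟩
    have hL (k : ℕ) : leftMoment f k x = 0 := integral_undef
      (mt (intervalIntegrable_div_one_sub_pow_iff hf ⟨by linarith [hx.1], hx.2⟩ k).1 h₀)
    simp [heq x hx, hL]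

theorem YBBEquation.intervalIntegrable_right (hf : ContinuousOn f (Ioo 0 1))
    (h : YBBEquation f a) : IntervalIntegrable f volume (1 / 2) 1 := by
  by_contra h₁
  have hR (x : ℝ) (hx : x ∈ Ioo (0 : ℝ) 1) (k : ℕ) : rightMoment f k x = 0 :=
    integral_undef (mt (intervalIntegrable_div_pow_iff hf hx k).1 h₁)
  obtain ⟨C, hC⟩ := exists_bound_of_left_equation hf fun x hx => by
    have hx' : x ∈ Ioo (0 : ℝ) 1 := ⟨by linarith [hx.1], hx.2⟩
    rw [h x hx', hR x hx' 3, hR x hx' 4]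
    simp [ybbCoeff₃, ybbCoeff₄]
    ring
  exact h₁ (intervalIntegrable_of_continuousOn_of_norm_le (by norm_num)
    (hf.mono (Ioo_subset_Ioo_left (by norm_num))) fun x hx => hC x ⟨hx.1.le, hx.2⟩)

theorem YBBEquation.intervalIntegrable_left (hf : ContinuousOn f (Ioo 0 1))
    (h : YBBEquation f a) : IntervalIntegrable f volume 0 (1 / 2) := by
  have hf' : ContinuousOn (fun x => f (1 - x)) (Ioo 0 1) :=
    hf.comp (by fun_prop) fun x hx => ⟨sub_pos.2 hx.2, sub_lt_self 1 hx.1⟩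
  have := (h.comp_one_sub.intervalIntegrable_right hf').comp_sub_left 1
  norm_num at this
  exact this.symm

theorem YBBEquation.hasDerivAt (hf : ContinuousOn f (Ioo 0 1)) (h : YBBEquation f a)
    ⦃t : ℝ⦄ (ht : t ∈ Ioo (0 : ℝ) 1) (n : ℕ) :
    HasDerivAt (momentTerm f ybbCoeff₃ ybbCoeff₄ n)
      (momentTerm f ybbCoeff₃ ybbCoeff₄ (n + 1) t + momentWeight ybbCoeff₃ ybbCoeff₄ n t * f t) t :=
  hasDerivAt_momentTerm (hasDerivAt_rightMoment hf (h.intervalIntegrable_right hf) ht)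
    (hasDerivAt_leftMoment hf (h.intervalIntegrable_left hf) ht) _ _ n

theorem YBBEquation.hasDerivAt_self (hf : ContinuousOn f (Ioo 0 1)) (h : YBBEquation f a)
    ⦃t : ℝ⦄ (ht : t ∈ Ioo (0 : ℝ) 1) :
    HasDerivAt f (momentTerm f ybbCoeff₃ ybbCoeff₄ 1 t) t := by
  refine ((h.hasDerivAt hf ht 0).const_add a).congr_of_eventuallyEq
    (Filter.eventually_of_mem (isOpen_Ioo.mem_nhds ht) fun s hs => h.eq_add_momentTerm hs)
    |>.congr_deriv ?_
  rw [momentWeight_ybb_zero ht]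
  ring

end Integrability

/-- If a four-times continuously differentiable `f` satisfies the integral equation
of YBB-Quickselect (no sampling, constant partitioning coefficient `a`) on `(0,1)`,
then it satisfies the fourth-order ODE
`f'''' = 2 (1 − 3α(1−α)) / (α²(1−α)²) · f''`. -/
theorem ybb_integral_eq_implies_ode (f : ℝ → ℝ) (a : ℝ)
    (hf : ContDiffOn ℝ 4 f (Set.Ioo (0:ℝ) 1))
    (heq : ∀ α ∈ Set.Ioo (0:ℝ) 1,
      f α = a + 2 * (α ^ 2 * (∫ x in α..(1:ℝ), f x / x ^ 3)
        - α ^ 3 * (∫ x in α..(1:ℝ), f x / x ^ 4)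
        + (1 - α) ^ 2 * (∫ x in (0:ℝ)..α, f x / (1 - x) ^ 3)
        - (1 - α) ^ 3 * (∫ x in (0:ℝ)..α, f x / (1 - x) ^ 4)
        + ((1 - α) ^ 3 / 3) * (∫ x in (0:ℝ)..α, f x / (1 - x) ^ 3)
        + (α ^ 3 / 3) * (∫ x in α..(1:ℝ), f x / x ^ 3))) :
    ∀ α ∈ Set.Ioo (0:ℝ) 1,
      iteratedDerivWithin 4 f (Set.Ioo (0:ℝ) 1) α
        = 2 * (1 - 3 * α * (1 - α)) / (α ^ 2 * (1 - α) ^ 2)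
          * iteratedDerivWithin 2 f (Set.Ioo (0:ℝ) 1) α := by
  intro α hα
  have hc : ContinuousOn f (Ioo 0 1) := hf.continuousOn
  have hT := YBBEquation.hasDerivAt (a := a) hc heq
  rw [← ybbRate_eq hα]
  refine iteratedDerivWithin_four_eq_of_hasDerivAt isOpen_Ioo (fun t => hasDerivAt_ybbRate)
    (fun t => hasDerivAt_ybbRate') (YBBEquation.hasDerivAt_self (a := a) hc heq)
    (fun t ht => (hT ht 1).congr_deriv ?_)
    (fun t ht => (hT ht 2).congr_deriv ?_) (fun t ht => (hT ht 3).congr_deriv ?_) hα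
  · rw [momentWeight_ybb_one ht]
    ring
  · rw [momentWeight_ybb_two ht]
    ring
  · rw [momentWeight_ybb_three ht, momentTerm_ybb_four]
    simp
end

section
/- With c_CQS(α) = 2 + 2h(α) and c_YQS(α) = (19/12)·(3/2 + h(α)), where h(α) = −α ln α − (1−α)ln(1−α), one has c_CQS(α) < c_YQS(α) for all α ∈ (0,1); i.e., classic Quickselect performs fewer comparisons than YBB-Select for every fixed relative rank. -/
noncomputable def binEnt (x : ℝ) : ℝ := -x * Real.log x - (1 - x) * Real.log (1 - x)

/-! Both costs are affine in `h(α)`, and `c_CQS < c_YQS` amounts to `h(α) < 9/10`, which holds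
because the entropy never exceeds `log 2 < 0.7`. -/

lemma binEnt_eq_binEntropy (x : ℝ) : binEnt x = Real.binEntropy x := by
  simp only [binEnt, Real.binEntropy, Real.log_inv]
  ring

lemma binEnt_lt_nine_tenths (x : ℝ) : binEnt x < 9 / 10 := by
  rw [binEnt_eq_binEntropy]
  linarith [Real.binEntropy_le_log_two (p := x), Real.log_two_lt_d9]

/-- Classic Quickselect uses fewer comparisons than YBB-Select for every fixed
relative rank: `2 + 2h(α) < (19/12)(3/2 + h(α))` for all `α ∈ (0,1)`. -/
theorem cqs_fewer_comparisons_than_yqs :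
    ∀ α ∈ Set.Ioo (0:ℝ) 1,
      2 + 2 * binEnt α < 19 / 12 * (3 / 2 + binEnt α) := by
  intro α _
  linarith [binEnt_lt_nine_tenths α]
end
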